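/- arXiv:1507.06867 — 9 statements merged into one kernel-verified Lean document; each statement's English description precedes it below -/
import Mathlib

section
/- Let f : A → B be a homomorphism of commutative rings such that every element of the kernel of f is nilpotent, and such that for every b ∈ B there exists a positive integer n with b^n in the image of f. Then the induced map Spec(B) → Spec(A) between prime spectra, sending a prime ideal q ⊆ B to its preimage f⁻¹(q), is a homeomorphism for the Zariski topologies. -/
/-- An `N`-isomorphism of commutative rings (kernel consists of nilpotent elements, and every
element of the target has some positive power in the image) induces a homeomorphism on
prime spectra with the Zariski topology. -/
theorem spec_homeomorph_of_N_isomorphism {A B : Type*} [CommRing A] [CommRing B] (f : A →+* B)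
    (hker : ∀ x ∈ RingHom.ker f, IsNilpotent x)
    (hpow : ∀ b : B, ∃ n : ℕ, 0 < n ∧ b ^ n ∈ Set.range f) :
    IsHomeomorph (PrimeSpectrum.comap f) :=
  PrimeSpectrum.isHomeomorph_comap f hpow fun x hx ↦ mem_nilradical.mpr (hker x hx)
end

section
/- Let f : A → B be a homomorphism of commutative rings such that for every b ∈ B there exists a positive integer n with b^n in the image of f. Then the induced map Spec(B) → Spec(A), q ↦ f⁻¹(q), is injective: if two prime ideals of B have the same preimage in A, they are equal. -/
theorem Ideal.IsPrime.mem_iff_mem_comap_of_pow_eq {A B : Type*} [CommRing A] [CommRing B]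
    {f : A →+* B} {q : Ideal B} (hq : q.IsPrime) {b : B} {n : ℕ} (hn : 0 < n) {a : A}
    (ha : f a = b ^ n) : b ∈ q ↔ a ∈ q.comap f := by
  rw [Ideal.mem_comap, ha, hq.pow_mem_iff_mem n hn]

/-- If `f : A → B` is a ring homomorphism such that every element of `B` has some positive
power lying in the image of `f`, then the induced map `Spec B → Spec A`, `q ↦ f⁻¹(q)`,
is injective. -/
theorem spec_comap_injective_of_pow_mem_range {A B : Type*} [CommRing A] [CommRing B]
    (f : A →+* B)
    (hpow : ∀ b : B, ∃ n : ℕ, 0 < n ∧ b ^ n ∈ Set.range f) :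
    Function.Injective (PrimeSpectrum.comap f) := by
  intro p q hpq
  ext b
  obtain ⟨n, hn, a, ha⟩ := hpow b
  rw [p.isPrime.mem_iff_mem_comap_of_pow_eq hn ha, q.isPrime.mem_iff_mem_comap_of_pow_eq hn ha,
    ← PrimeSpectrum.comap_asIdeal, ← PrimeSpectrum.comap_asIdeal, hpq]
end

section
/- Let f : A → B be a homomorphism of commutative rings such that (1) the induced homomorphism A ⊗_ℤ ℚ → B ⊗_ℤ ℚ is an isomorphism, and (2) for every prime number p, the induced homomorphism between the localizations of A and of B at the multiplicative set of nonzero integers coprime to p is an F_p-isomorphism. Then for every algebraically closed field K, the map from ring homomorphisms B → K to ring homomorphisms A → K given by precomposition with f is a bijection. -/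
/-! Split according to the characteristic of `K`. In characteristic zero a homomorphism `B → K`
is the same as one out of `ℚ ⊗ B`, so the rational isomorphism gives the bijection. In
characteristic `p`, homomorphisms out of `B` are those out of its localization at `p`, and then
those out of its reduction mod `p`. The `F_p`-isomorphism hypothesis makes the reduction of
`locMap p f` a `p`-radical homomorphism, along which homomorphisms into a perfect ring such as
`K` extend uniquely (`PerfectRing.liftEquiv`). -/

/-- The multiplicative set of integers coprime to `p` (for `p` prime these are exactly the
nonzero integers coprime to `p`). -/
def intCoprime (p : ℕ) : Submonoid ℤ where
  carrier := {n : ℤ | IsCoprime n (p : ℤ)}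
  one_mem' := isCoprime_one_left
  mul_mem' := fun ha hb => IsCoprime.mul_left ha hb

/-- The image in a commutative ring `A` of the multiplicative set of integers coprime to `p`. -/
def intCoprimeIn (p : ℕ) (A : Type*) [CommRing A] : Submonoid A :=
  (intCoprime p).map (Int.castRingHom A).toMonoidHom

/-- The localization of `A` at the multiplicative set of (nonzero) integers coprime to `p`,
i.e. `A ⊗_ℤ ℤ₍ₚ₎`. -/
abbrev LocAt (p : ℕ) (A : Type*) [CommRing A] := Localization (intCoprimeIn p A)

/-- The homomorphism between the localizations at `p` induced by `f : A →+* B`. -/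
noncomputable def locMap (p : ℕ) {A B : Type*} [CommRing A] [CommRing B] (f : A →+* B) :
    LocAt p A →+* LocAt p B :=
  IsLocalization.map (M := intCoprimeIn p A) (T := intCoprimeIn p B)
      (Localization (intCoprimeIn p B)) f
    (by
      intro a ha
      obtain ⟨n, hn, rfl⟩ := (Submonoid.mem_map (f := (Int.castRingHom A).toMonoidHom)).mp ha
      exact Submonoid.mem_comap.mpr
        ((Submonoid.mem_map (f := (Int.castRingHom B).toMonoidHom)).mpr ⟨n, hn, by simp⟩))

/-- A ring homomorphism `g : R →+* S` is an `F_p`-isomorphism if every element of its kernel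
is nilpotent and for every `s : S` some `p`-power `s ^ (p ^ m)` lies in the image of `g`. -/
def IsFpIso (p : ℕ) {R S : Type*} [CommRing R] [CommRing S] (g : R →+* S) : Prop :=
  (∀ x ∈ RingHom.ker g, IsNilpotent x) ∧ ∀ s : S, ∃ m : ℕ, s ^ p ^ m ∈ Set.range g

open Function

section Precomposition

variable {R S R' S' K : Type*} [CommRing R] [CommRing S] [CommRing R'] [CommRing S'] [CommRing K]

theorem RingHom.bijective_comp_of_bijective {e : R →+* S} (he : Bijective e) :
    Bijective fun ψ : S →+* K => ψ.comp e := by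
  set e' := RingEquiv.ofBijective e he
  refine bijective_iff_has_inverse.2 ⟨fun φ => φ.comp e'.symm.toRingHom, fun ψ => ?_, fun φ => ?_⟩
  · ext s; exact congrArg ψ (e'.apply_symm_apply s)
  · ext r; exact congrArg φ (e'.symm_apply_apply r)

theorem RingHom.bijective_comp_of_comp_eq {f : R →+* S} {f' : R' →+* S'} {i : R →+* R'}
    {j : S →+* S'} (h : f'.comp i = j.comp f)
    (hi : Bijective fun ψ : R' →+* K => ψ.comp i) (hj : Bijective fun ψ : S' →+* K => ψ.comp j)
    (hf' : Bijective fun ψ : S' →+* K => ψ.comp f') :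
    Bijective fun ψ : S →+* K => ψ.comp f := by
  have hcomp : ((fun ψ : S →+* K => ψ.comp f) ∘ fun ψ : S' →+* K => ψ.comp j) =
      (fun ψ : R' →+* K => ψ.comp i) ∘ fun ψ : S' →+* K => ψ.comp f' := by
    funext ψ
    change (ψ.comp j).comp f = (ψ.comp f').comp i
    rw [RingHom.comp_assoc, ← h, RingHom.comp_assoc]
  exact (Bijective.of_comp_iff _ hj).1 (hcomp ▸ hi.comp hf')

end Precomposition

section Rational

open Algebra.TensorProduct
open scoped TensorProduct

variable {A B : Type*} [CommRing A] [CommRing B] (K : Type*) [CommRing K] [Algebra ℚ K]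

theorem bijective_comp_includeRight_rat :
    Bijective fun ψ : ℚ ⊗[ℤ] B →+* K => ψ.comp (includeRight (R := ℤ) (A := ℚ)).toRingHom :=
  ((RingHom.equivRatAlgHom _ K).trans ((AlgHom.liftEquiv ℤ ℚ B K).symm.trans
    (RingHom.equivIntAlgHom B K).symm)).bijective

theorem bijective_comp_of_rational_iso (f : A →+* B)
    (hQ : Bijective (map (AlgHom.id ℤ ℚ) f.toIntAlgHom)) :
    Bijective fun ψ : B →+* K => ψ.comp f := by
  refine RingHom.bijective_comp_of_comp_eq (f' := (map (AlgHom.id ℤ ℚ) f.toIntAlgHom).toRingHom)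
    ?_ (bijective_comp_includeRight_rat K) (bijective_comp_includeRight_rat K)
    (RingHom.bijective_comp_of_bijective hQ)
  ext a
  simp

end Rational

theorem bijective_comp_algebraMap_locAt (p : ℕ) (B K : Type*) [CommRing B] [CommRing K]
    [CharP K p] :
    Bijective fun ψ : LocAt p B →+* K => ψ.comp (algebraMap B (LocAt p B)) := by
  refine ⟨fun ψ₁ ψ₂ h => IsLocalization.ringHom_ext (intCoprimeIn p B) h, fun φ => ?_⟩
  have hunit : ∀ y : intCoprimeIn p B, IsUnit (φ y) := by
    rintro ⟨_, n, ⟨a, b, hab⟩, rfl⟩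
    refine .of_mul_eq_one (a : K) ?_
    have hK := congrArg (Int.cast : ℤ → K) hab
    push_cast [CharP.cast_eq_zero K p] at hK
    simpa [mul_comm] using hK
  exact ⟨IsLocalization.lift hunit, RingHom.ext (IsLocalization.lift_eq hunit)⟩

abbrev ModNatCast (p : ℕ) (R : Type*) [CommRing R] := R ⧸ Ideal.span {(p : R)}

namespace ModNatCast

variable (p : ℕ) {R S : Type*} [CommRing R] [CommRing S]

theorem natCast_eq_zero : (p : ModNatCast p R) = 0 := by
  rw [← map_natCast (Ideal.Quotient.mk _), Ideal.Quotient.eq_zero_iff_mem]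
  exact Ideal.mem_span_singleton_self _

theorem charP [Nontrivial (ModNatCast p R)] (hp : p.Prime) : CharP (ModNatCast p R) p :=
  (CharP.charP_iff_prime_eq_zero hp).2 (natCast_eq_zero p)

noncomputable def map (g : R →+* S) : ModNatCast p R →+* ModNatCast p S :=
  Ideal.quotientMap _ g <| by
    rw [← Ideal.map_le_iff_le_comap, Ideal.map_span, Set.image_singleton, map_natCast]

theorem map_comp_mk (g : R →+* S) :
    (map p g).comp (Ideal.Quotient.mk _) = (Ideal.Quotient.mk _).comp g :=
  Ideal.quotientMap_comp_mk _

theorem bijective_comp_mk (R K : Type*) [CommRing R] [CommRing K] [CharP K p] :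
    Bijective fun ψ : ModNatCast p R →+* K => ψ.comp (Ideal.Quotient.mk _) := by
  refine ⟨fun ψ₁ ψ₂ h => Ideal.Quotient.ringHom_ext h, fun φ => ?_⟩
  have hker : Ideal.span {(p : R)} ≤ RingHom.ker φ :=
    (Ideal.span_singleton_le_iff_mem _).2 (by simp [RingHom.mem_ker])
  exact ⟨Ideal.Quotient.lift _ φ hker, RingHom.ext fun _ => Ideal.Quotient.lift_mk _ φ hker⟩

end ModNatCast

theorem IsPRadical.subsingleton {K L : Type*} [CommSemiring K] [CommSemiring L] (i : K →+* L)
    (p : ℕ) [IsPRadical i p] [Subsingleton L] : Subsingleton K := by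
  obtain ⟨n, hn⟩ := mem_pNilradical.1 <|
    IsPRadical.ker_le i p (show (1 : K) ∈ RingHom.ker i from Subsingleton.elim _ _)
  exact subsingleton_of_zero_eq_one (by simpa using hn.symm)

namespace IsFpIso

variable {p : ℕ} {R S : Type*} [CommRing R] [CommRing S] {g : R →+* S}

theorem isPRadical_map (hp : p.Prime) (hg : IsFpIso p g) :
    IsPRadical (ModNatCast.map p g) p where
  pow_mem' x := by
    obtain ⟨s, rfl⟩ := Ideal.Quotient.mk_surjective x
    obtain ⟨m, r, hr⟩ := hg.2 s
    exact ⟨m, Ideal.Quotient.mk _ r, by simp [ModNatCast.map, hr]⟩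
  ker_le' x hx := by
    obtain ⟨r, rfl⟩ := Ideal.Quotient.mk_surjective x
    rw [pNilradical_eq_nilradical hp.one_lt, mem_nilradical]
    rw [RingHom.mem_ker, ModNatCast.map, Ideal.quotientMap_mk,
      Ideal.Quotient.eq_zero_iff_mem] at hx
    obtain ⟨c, hc⟩ := Ideal.mem_span_singleton'.1 hx
    obtain ⟨M, d, hd⟩ := hg.2 c
    -- `r ^ p ^ M` is `p ^ p ^ M * d` up to a nilpotent, hence nilpotent modulo `p`
    have hker : r ^ p ^ M - d * p ^ p ^ M ∈ RingHom.ker g := by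
      rw [RingHom.mem_ker, map_sub, map_mul, map_pow, map_pow, hd, ← hc, map_natCast, mul_pow,
        sub_self]
    have hnil := (hg.1 _ hker).map (Ideal.Quotient.mk (Ideal.span {(p : R)}))
    rw [map_sub, map_mul, map_pow, map_pow, map_natCast, ModNatCast.natCast_eq_zero,
      zero_pow (pow_pos hp.pos M).ne', mul_zero, sub_zero] at hnil
    exact hnil.of_pow

theorem bijective_comp_map (hp : p.Prime) (hg : IsFpIso p g) (K : Type*) [CommRing K]
    [CharP K p] [PerfectRing K p] :
    Bijective fun ψ : ModNatCast p S →+* K => ψ.comp (ModNatCast.map p g) := by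
  have := Fact.mk hp
  have := hg.isPRadical_map hp
  rcases subsingleton_or_nontrivial (ModNatCast p S) with _ | _
  · have := CharP.nontrivial_of_char_ne_one (R := K) hp.ne_one
    have := IsPRadical.subsingleton (ModNatCast.map p g) p
    have : IsEmpty (ModNatCast p S →+* K) := ⟨fun ψ => not_nontrivial _ ψ.domain_nontrivial⟩
    have : IsEmpty (ModNatCast p R →+* K) := ⟨fun ψ => not_nontrivial _ ψ.domain_nontrivial⟩
    exact ⟨fun ψ => isEmptyElim ψ, fun φ => isEmptyElim φ⟩
  · have := (ModNatCast.map p g).domain_nontrivial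
    have := ModNatCast.charP p (R := R) hp
    have := ModNatCast.charP p (R := S) hp
    exact (PerfectRing.liftEquiv K (ModNatCast.map p g) p).symm.bijective

theorem bijective_comp (hp : p.Prime) (hg : IsFpIso p g) (K : Type*) [CommRing K]
    [CharP K p] [PerfectRing K p] :
    Bijective fun ψ : S →+* K => ψ.comp g :=
  RingHom.bijective_comp_of_comp_eq (ModNatCast.map_comp_mk p g)
    (ModNatCast.bijective_comp_mk p R K) (ModNatCast.bijective_comp_mk p S K)
    (hg.bijective_comp_map hp K)

end IsFpIso

/-- If `f : A → B` is a ring homomorphism which is a rational isomorphism (after tensoring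
with `ℚ` over `ℤ`) and an `F_p`-isomorphism after localizing at every prime `p`, then
precomposition with `f` is a bijection on ring homomorphisms into any algebraically
closed field: `f` is a `V`-isomorphism. -/
theorem bijective_comp_of_rational_iso_and_Fp_iso {A B : Type*} [CommRing A] [CommRing B]
    (f : A →+* B)
    (hQ : Function.Bijective
      (Algebra.TensorProduct.map (AlgHom.id ℤ ℚ) (f.toIntAlgHom) :
        TensorProduct ℤ ℚ A →ₐ[ℤ] TensorProduct ℤ ℚ B))
    (hp : ∀ p : ℕ, p.Prime → IsFpIso p (locMap p f)) :
    ∀ (K : Type*) [Field K] [IsAlgClosed K],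
      Function.Bijective (fun g : B →+* K => g.comp f) := by
  intro K _ _
  obtain ⟨p, _⟩ := CharP.exists K
  rcases CharP.char_is_prime_or_zero K p with hprime | rfl
  · have := Fact.mk hprime
    exact RingHom.bijective_comp_of_comp_eq (IsLocalization.map_comp _)
      (bijective_comp_algebraMap_locAt p A K) (bijective_comp_algebraMap_locAt p B K)
      ((hp p hprime).bijective_comp hprime K)
  · have := CharP.charP_to_charZero K
    exact bijective_comp_of_rational_iso K f hQ
end

section
/- Let p be a prime number and let f : A → B be a homomorphism of commutative rings such that every element of the kernel of f is nilpotent and for every b ∈ B there exists m ≥ 0 with b^{p^m} in the image of f. Then the induced homomorphism A/pA → B/pB has the same two properties: every element of its kernel is nilpotent, and for every element of B/pB some p-power of it lies in its image. -/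
/-- Reducing an `F_p`-isomorphism mod `p` yields an `F_p`-isomorphism: if `f : A →+* B` has
nilpotent kernel and every element of `B` has some `p`-power `b ^ (p ^ m)` in the image of
`f`, then the induced map `A/pA → B/pB` has the same two properties. -/
theorem fpIso_mod_p {A B : Type*} [CommRing A] [CommRing B] (p : ℕ) (hp : p.Prime)
    (f : A →+* B)
    (hker : ∀ x ∈ RingHom.ker f, IsNilpotent x)
    (hpow : ∀ b : B, ∃ m : ℕ, b ^ p ^ m ∈ Set.range f) :
    (∀ x ∈ RingHom.ker (Ideal.quotientMap (Ideal.span {(p : B)}) f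
        (by
          rw [Ideal.span_le, Set.singleton_subset_iff]
          show f (p : A) ∈ Ideal.span {(p : B)}
          rw [map_natCast]
          exact Ideal.subset_span rfl)),
      IsNilpotent x) ∧
    (∀ b : B ⧸ Ideal.span {(p : B)}, ∃ m : ℕ,
      b ^ p ^ m ∈ Set.range (Ideal.quotientMap (Ideal.span {(p : B)}) f
        (by
          rw [Ideal.span_le, Set.singleton_subset_iff]
          show f (p : A) ∈ Ideal.span {(p : B)}
          rw [map_natCast]
          exact Ideal.subset_span rfl))) := by
  set I : Ideal B := Ideal.span {(p : B)} with hI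
  have hpA : (p : A) ∈ Ideal.span {(p : A)} := Ideal.subset_span rfl
  constructor
  · intro x hx
    obtain ⟨a, rfl⟩ := Ideal.Quotient.mk_surjective x
    rw [RingHom.mem_ker, Ideal.quotientMap_mk, Ideal.Quotient.eq_zero_iff_mem,
      Ideal.mem_span_singleton] at hx
    obtain ⟨b, hb⟩ := hx
    obtain ⟨m, a', ha'⟩ := hpow b
    have hker' : a ^ p ^ m - (p : A) ^ p ^ m * a' ∈ RingHom.ker f := by
      simp [RingHom.mem_ker, hb, mul_pow, ha']
    obtain ⟨n, hn⟩ := hker _ hker'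
    refine ⟨p ^ m * n, ?_⟩
    have hp0 : (Ideal.Quotient.mk (Ideal.span {(p : A)}) ((p : A))) = 0 :=
      Ideal.Quotient.eq_zero_iff_mem.mpr hpA
    have key : (Ideal.Quotient.mk (Ideal.span {(p : A)}) a) ^ p ^ m =
        Ideal.Quotient.mk (Ideal.span {(p : A)}) (a ^ p ^ m - (p : A) ^ p ^ m * a') := by
      simp [map_sub, map_mul, map_pow, hp0, zero_pow (pow_ne_zero m hp.ne_zero)]
    rw [pow_mul, key, ← map_pow, hn, map_zero]
  · intro b
    obtain ⟨b0, rfl⟩ := Ideal.Quotient.mk_surjective b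
    obtain ⟨m, a, ha⟩ := hpow b0
    exact ⟨m, Ideal.Quotient.mk _ a, by rw [Ideal.quotientMap_mk, ha, map_pow]⟩
end

section
/- Let R be a commutative ring, p a prime number, k ≥ 0 an integer, and z ∈ R an element which is nilpotent and satisfies p^k · z = 0. Then there exists n ≥ 0 such that (x + z)^{p^n} = x^{p^n} for every x ∈ R. -/
/-!
Let `J = (z)` and `I = (p) + J`. In `a ^ p - b ^ p = (a - b) · ∑ aⁱ bᵖ⁻¹⁻ⁱ` the second factor is
`≡ p bᵖ⁻¹ ≡ 0 mod I` when `a ≡ b mod I`, so raising to the `p`-th power turns congruences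
mod `L ≤ I` into congruences mod `L * I`. Starting from `x + z ≡ x mod J` we get
`(x + z) ^ p ^ n ≡ x ^ p ^ n mod J * I ^ n`, and `J * I ^ (k + m) ≤ J * (p ^ k) + J ^ (m + 1) = 0`
once `p ^ k z = 0` and `z ^ m = 0`.
-/

open Ideal

namespace SModEq

variable {R : Type*} [CommRing R] {I J : Ideal R} {p : ℕ}

theorem pow_pow_mul_pow (hpI : (p : R) ∈ I) (hJI : J ≤ I) {x y : R} (h : x ≡ y [SMOD J])
    (n : ℕ) : x ^ p ^ n ≡ y ^ p ^ n [SMOD J * I ^ n] := by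
  induction n with
  | zero => simpa
  | succ n ih =>
    rw [pow_succ p, pow_mul, pow_mul, pow_succ I, ← mul_assoc]
    exact ih.pow_mul_of_le hpI (mul_le_left.trans hJI)

end SModEq

theorem Ideal.mul_sup_pow_add_eq_bot {R : Type*} [CommRing R] {I J : Ideal R} {k m : ℕ}
    (hI : J * I ^ k = ⊥) (hJ : J ^ m = ⊥) : J * (I ⊔ J) ^ (k + m) = ⊥ :=
  eq_bot_iff.2 <| calc
    J * (I ⊔ J) ^ (k + m) ≤ J * (I ^ k ⊔ J ^ m) := mul_mono_right sup_pow_add_le_pow_sup_pow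
    _ = ⊥ := by rw [mul_sup, hI, hJ, mul_bot, sup_bot_eq]

theorem pow_add_nilpotent_p_torsion_general {R : Type*} [CommRing R] (p : ℕ) (k : ℕ)
    (z : R) (hz : IsNilpotent z) (hk : (p : R) ^ k * z = 0) :
    ∃ n : ℕ, ∀ x : R, (x + z) ^ p ^ n = x ^ p ^ n := by
  obtain ⟨m, hm⟩ := hz
  have hpJ : span {z} * span {(p : R)} ^ k = ⊥ := by
    rw [span_singleton_pow, span_singleton_mul_span_singleton, mul_comm, hk, span_singleton_eq_bot]
  have hJ : span {z} ^ m = ⊥ := by rw [span_singleton_pow, hm, span_singleton_eq_bot]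
  refine ⟨k + m, fun x => ?_⟩
  have hxz : x + z ≡ x [SMOD span {z}] := SModEq.sub_mem.2 (by simp [mem_span_singleton_self z])
  have hpow := hxz.pow_pow_mul_pow (I := span {(p : R)} ⊔ span {z})
    (mem_sup_left (mem_span_singleton_self _)) le_sup_right (k + m)
  rwa [mul_sup_pow_add_eq_bot hpJ hJ, SModEq.bot] at hpow

/-- If `z` is a nilpotent element of a commutative ring killed by `p ^ k` for a prime `p`,
then `(x + z) ^ (p ^ n) = x ^ (p ^ n)` for all `x`, for all sufficiently large `n`. -/
theorem pow_add_nilpotent_p_torsion {R : Type*} [CommRing R] (p : ℕ) (hp : p.Prime) (k : ℕ)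
    (z : R) (hz : IsNilpotent z) (hk : (p : R) ^ k * z = 0) :
    ∃ n : ℕ, ∀ x : R, (x + z) ^ p ^ n = x ^ p ^ n :=
  pow_add_nilpotent_p_torsion_general p k z hz hk
end

section
/- Let p be a prime number and let H be a finite group with an abelian normal subgroup N such that the quotient group H/N is a p-group. Then there exist subgroups N₁ and P of H such that: N₁ is contained in N, N₁ is normal in H, the order of N₁ is coprime to p, P is a p-group, N₁ ∩ P is trivial, and N₁ · P = H (so H is an internal semidirect product of N₁ by P). -/
/-- Let `H` be a finite group with an abelian normal subgroup `N` such that `H/N` is a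
`p`-group. Then `H` is an internal semidirect product of a normal subgroup `N₁ ≤ N` of
order coprime to `p` by a `p`-subgroup `P`. -/
theorem semidirect_split_of_abelian_normal_p_quotient (p : ℕ) (hp : p.Prime)
    (H : Type*) [Group H] [Finite H] (N : Subgroup H) [N.Normal]
    (hab : ∀ a b : N, a * b = b * a)
    (hq : IsPGroup p (H ⧸ N)) :
    ∃ N₁ P : Subgroup H, N₁ ≤ N ∧ N₁.Normal ∧ (Nat.card N₁).Coprime p ∧
      IsPGroup p P ∧ N₁ ⊓ P = ⊥ ∧ ∀ h : H, ∃ n ∈ N₁, ∃ q ∈ P, n * q = h := by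
  haveI : Fact p.Prime := ⟨hp⟩
  -- N₁ : elements of N of order coprime to p
  set N₁ : Subgroup H :=
    { carrier := {x | x ∈ N ∧ ¬ p ∣ orderOf x}
      one_mem' := ⟨N.one_mem, by simp [hp.one_lt.ne']⟩
      mul_mem' := by
        rintro a b ⟨haN, ha⟩ ⟨hbN, hb⟩
        refine ⟨N.mul_mem haN hbN, fun hdvd => ?_⟩
        have hcomm : Commute a b := by
          have := hab ⟨a, haN⟩ ⟨b, hbN⟩
          exact congrArg Subtype.val this
        have h1 : orderOf (a * b) ∣ Nat.lcm (orderOf a) (orderOf b) :=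
          hcomm.orderOf_mul_dvd_lcm
        have h2 : p ∣ orderOf a * orderOf b :=
          dvd_trans hdvd (h1.trans (Nat.lcm_dvd_mul _ _))
        rcases hp.dvd_mul.mp h2 with h | h
        · exact ha h
        · exact hb h
      inv_mem' := by
        rintro a ⟨haN, ha⟩
        exact ⟨N.inv_mem haN, by simpa using ha⟩ } with hN₁def
  have hmem : ∀ x : H, x ∈ N₁ ↔ x ∈ N ∧ ¬ p ∣ orderOf x := fun x => Iff.rfl
  have hN₁N : N₁ ≤ N := fun x hx => ((hmem x).mp hx).1
  have hnormal : N₁.Normal := by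
    constructor
    intro n hn g
    rcases (hmem n).mp hn with ⟨hnN, hno⟩
    refine (hmem _).mpr ⟨‹N.Normal›.conj_mem n hnN g, ?_⟩
    have : orderOf (g * n * g⁻¹) = orderOf n := by
      have h : SemiconjBy g n (g * n * g⁻¹) := by
        unfold SemiconjBy; group
      exact (h.orderOf_eq).symm
    rwa [this]
  -- coprimality of card N₁
  have hcop : (Nat.card N₁).Coprime p := by
    rw [Nat.coprime_comm, hp.coprime_iff_not_dvd]
    intro hdvd
    obtain ⟨g, hg⟩ := exists_prime_orderOf_dvd_card' (G := N₁) p hdvd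
    have : ¬ p ∣ orderOf (g : H) := ((hmem _).mp g.2).2
    rw [Subgroup.orderOf_coe, hg] at this
    exact this dvd_rfl
  -- H ⧸ N₁ is a p-group
  haveI := hnormal
  have hq' : IsPGroup p (H ⧸ N₁) := by
    intro x
    obtain ⟨y, rfl⟩ := QuotientGroup.mk_surjective x
    obtain ⟨k, hk⟩ := hq ((QuotientGroup.mk (s := N) y))
    have hyN : y ^ p ^ k ∈ N := by
      rwa [← QuotientGroup.mk_pow, QuotientGroup.eq_one_iff] at hk
    set n := y ^ p ^ k with hn
    set o := orderOf n with ho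
    have ho0 : o ≠ 0 := (isOfFinOrder_of_finite n).orderOf_pos.ne'
    set a := o.factorization p with ha
    have hordpow : orderOf (n ^ p ^ a) = o / p ^ a := by
      rw [orderOf_pow, ← ho, Nat.gcd_eq_right (Nat.ordProj_dvd o p)]
    have hnmem : n ^ p ^ a ∈ N₁ := by
      refine (hmem _).mpr ⟨N.pow_mem hyN _, ?_⟩
      rw [hordpow]
      exact Nat.not_dvd_ordCompl hp ho0
    refine ⟨k + a, ?_⟩
    rw [← QuotientGroup.mk_pow, QuotientGroup.eq_one_iff]
    rw [pow_add, pow_mul]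
    exact hnmem
  -- Schur-Zassenhaus
  obtain ⟨m, hm⟩ := (IsPGroup.iff_card).mp hq'
  have hcop' : Nat.Coprime (Nat.card N₁) (Nat.card (H ⧸ N₁)) := by
    rw [hm]; exact hcop.pow_right m
  obtain ⟨P, hP⟩ := Subgroup.exists_right_complement'_of_coprime hcop'
  refine ⟨N₁, P, hN₁N, hnormal, hcop, ?_, ?_, ?_⟩
  · -- P is a p-group
    intro x
    obtain ⟨k, hk⟩ := hq' (QuotientGroup.mk (x : H))
    refine ⟨k, ?_⟩
    have hx : (x : H) ^ p ^ k ∈ N₁ := by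
      rwa [← QuotientGroup.mk_pow, QuotientGroup.eq_one_iff] at hk
    have hxP : (x : H) ^ p ^ k ∈ P := P.pow_mem x.2 _
    have : (x : H) ^ p ^ k ∈ N₁ ⊓ P := ⟨hx, hxP⟩
    rw [disjoint_iff.mp hP.disjoint, Subgroup.mem_bot] at this
    ext
    simpa using this
  · exact disjoint_iff.mp hP.disjoint
  · intro h
    obtain ⟨⟨n, q⟩, hnq⟩ := hP.existsUnique h
    exact ⟨n, n.2, q, q.2, hnq.1⟩
end

section
/- Let p be a prime number and n ≥ 1 an integer. In the ring R = ℤ[X]/(X^{p^n} − 1), the class x of X^{p^{n−1}} − 1 is not nilpotent, and x lies in the kernel of the ring homomorphism R → ℤ[X]/(X^{p^{n−1}} − 1) induced by X ↦ X. -/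
open Polynomial

/-- The ideal `(X ^ (p ^ n) - 1)` is contained in the ideal `(X ^ (p ^ (n - 1)) - 1)`
of `ℤ[X]` (pulled back along the identity), since `X ^ (p ^ (n-1)) - 1` divides
`X ^ (p ^ n) - 1`. -/
theorem span_pow_sub_one_le (p n : ℕ) (hn : 1 ≤ n) :
    Ideal.span {(X : ℤ[X]) ^ p ^ n - 1} ≤
      (Ideal.span {(X : ℤ[X]) ^ p ^ (n - 1) - 1}).comap (RingHom.id ℤ[X]) := by
  rw [Ideal.comap_id, Ideal.span_le, Set.singleton_subset_iff, SetLike.mem_coe,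
    Ideal.mem_span_singleton]
  have h := sub_dvd_pow_sub_pow ((X : ℤ[X]) ^ p ^ (n - 1)) 1 p
  rwa [one_pow, ← pow_mul, ← pow_succ, Nat.sub_add_cancel hn] at h

/-- In `R = ℤ[X]/(X^{pⁿ} − 1)` (the representation ring of the cyclic group of order `pⁿ`),
the class of `X^{p^{n−1}} − 1` is not nilpotent, yet it lies in the kernel of the
restriction homomorphism `R → ℤ[X]/(X^{p^{n-1}} − 1)` induced by `X ↦ X`. -/
theorem cyclotomic_class_not_nilpotent_and_in_ker (p n : ℕ) (hp : p.Prime) (hn : 1 ≤ n) :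
    ¬ IsNilpotent ((Ideal.Quotient.mk (Ideal.span {(X : ℤ[X]) ^ p ^ n - 1}))
        (X ^ p ^ (n - 1) - 1)) ∧
    (Ideal.quotientMap (Ideal.span {(X : ℤ[X]) ^ p ^ (n - 1) - 1}) (RingHom.id ℤ[X])
        (span_pow_sub_one_le p n hn))
      ((Ideal.Quotient.mk (Ideal.span {(X : ℤ[X]) ^ p ^ n - 1}))
        (X ^ p ^ (n - 1) - 1)) = 0 := by
  constructor
  · rintro ⟨k, hk⟩
    rw [← map_pow, Ideal.Quotient.eq_zero_iff_mem, Ideal.mem_span_singleton] at hk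
    obtain ⟨q, hq⟩ := hk
    have hpn : (p ^ n : ℕ) ≠ 0 := pow_ne_zero _ hp.pos.ne'
    set ζ : ℂ := Complex.exp (2 * Real.pi * Complex.I / (p ^ n : ℕ))
    have hζ : IsPrimitiveRoot ζ (p ^ n) := Complex.isPrimitiveRoot_exp _ hpn
    have h0 := congrArg (aeval ζ) hq
    simp only [map_pow, map_mul, map_sub, map_one, aeval_X] at h0
    rw [hζ.pow_eq_one, sub_self, zero_mul, pow_eq_zero_iff' ] at h0
    have h1 : ζ ^ p ^ (n - 1) = 1 := by
      have := sub_eq_zero.mp h0.1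
      simpa using this
    have h2 : p ^ n ∣ p ^ (n - 1) := hζ.dvd_of_pow_eq_one _ h1
    have h3 : p ^ n ≤ p ^ (n - 1) := Nat.le_of_dvd (pow_pos hp.pos _) h2
    have h4 : p ^ (n - 1) < p ^ n :=
      Nat.pow_lt_pow_right hp.one_lt (Nat.sub_lt hn Nat.one_pos)
    omega
  · rw [Ideal.quotientMap_mk, RingHom.id_apply, Ideal.Quotient.eq_zero_iff_mem,
      Ideal.mem_span_singleton]
end

section
/- Let A = ℤ[s,t]/(s² − 1, t² − 1) and B = ℤ[u]/(u² − 1), and let ε : B → ℤ be the ring homomorphism with ε(u) = 1. Let r₁, r₂, r₃ : A → B be the ring homomorphisms determined by r₁(s) = 1, r₁(t) = u; r₂(s) = u, r₂(t) = 1; r₃(s) = u, r₃(t) = u. Let L = {(b₁, b₂, b₃) ∈ B × B × B : ε(b₁) = ε(b₂) = ε(b₃)}, a subring of B × B × B. Then the ring homomorphism r = (r₁, r₂, r₃) : A → L is injective, and the quotient abelian group L / r(A) has exactly two elements. -/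
set_option maxHeartbeats 1000000
set_option synthInstance.maxHeartbeats 400000


open Polynomial

noncomputable section

/-- The ideal `(u² − 1)` of `ℤ[u]`. -/
def JB : Ideal (Polynomial ℤ) := Ideal.span {(X : Polynomial ℤ) ^ 2 - 1}

/-- `B = ℤ[u]/(u² − 1)`, the representation ring of `C₂`. -/
abbrev B := Polynomial ℤ ⧸ JB

/-- The class `u` of the variable in `B = ℤ[u]/(u² − 1)`. -/
def u : B := Ideal.Quotient.mk JB X

lemma u_sq : u ^ 2 = 1 := by
  show (Ideal.Quotient.mk JB X) ^ 2 = 1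
  rw [← map_pow, ← map_one (Ideal.Quotient.mk JB), Ideal.Quotient.mk_eq_mk_iff_sub_mem]
  exact Ideal.subset_span rfl

/-- The augmentation `ε : B → ℤ`, `ε(u) = 1`. -/
def ε : B →+* ℤ :=
  Ideal.Quotient.lift JB (Polynomial.evalRingHom 1) (by
    intro a ha
    rw [JB, Ideal.mem_span_singleton] at ha
    obtain ⟨q, rfl⟩ := ha
    simp)

lemma eps_u : ε u = 1 := by
  show Ideal.Quotient.lift JB (Polynomial.evalRingHom 1) _ (Ideal.Quotient.mk JB X) = 1
  rw [Ideal.Quotient.lift_mk]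
  simp

/-- The ideal `(s² − 1, t² − 1)` of `ℤ[s,t]`. -/
def IA : Ideal (MvPolynomial (Fin 2) ℤ) :=
  Ideal.span {MvPolynomial.X 0 ^ 2 - 1, MvPolynomial.X 1 ^ 2 - 1}

/-- `A = ℤ[s,t]/(s² − 1, t² − 1)`, the representation ring of the Klein four-group. -/
abbrev A := MvPolynomial (Fin 2) ℤ ⧸ IA

/-- The ring homomorphism `A → T` sending `s ↦ t₀` and `t ↦ t₁`, for any two square roots
of unity `t₀, t₁` in a commutative ring `T`. -/
def resHom {T : Type} [CommRing T] (t₀ t₁ : T) (h₀ : t₀ ^ 2 = 1) (h₁ : t₁ ^ 2 = 1) :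
    A →+* T :=
  Ideal.Quotient.lift IA (MvPolynomial.aeval (R := ℤ) ![t₀, t₁]).toRingHom (by
    have hker : IA ≤ RingHom.ker (MvPolynomial.aeval (R := ℤ) ![t₀, t₁]).toRingHom := by
      rw [IA, Ideal.span_le]
      rintro x hx
      simp only [Set.mem_insert_iff, Set.mem_singleton_iff] at hx
      rcases hx with rfl | rfl <;>
        simp [RingHom.mem_ker, h₀, h₁, sub_eq_zero]
    exact fun a ha => RingHom.mem_ker.mp (hker ha))

/-- `r₁ : A → B`, `s ↦ 1`, `t ↦ u`: restriction to the first subgroup of order `2`. -/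
def r₁ : A →+* B := resHom 1 u (one_pow 2) u_sq

/-- `r₂ : A → B`, `s ↦ u`, `t ↦ 1`: restriction to the second subgroup of order `2`. -/
def r₂ : A →+* B := resHom u 1 u_sq (one_pow 2)

/-- `r₃ : A → B`, `s ↦ u`, `t ↦ u`: restriction to the diagonal subgroup of order `2`. -/
def r₃ : A →+* B := resHom u u u_sq u_sq

/-- The augmentation `A → ℤ`. -/
def dA : A →+* ℤ := resHom 1 1 (one_pow 2) (one_pow 2)

lemma eps_comp_resHom (b₀ b₁ : B) (h₀ : b₀ ^ 2 = 1) (h₁ : b₁ ^ 2 = 1)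
    (e₀ : ε b₀ = 1) (e₁ : ε b₁ = 1) :
    ε.comp (resHom b₀ b₁ h₀ h₁) = dA := by
  apply Ideal.Quotient.ringHom_ext
  apply MvPolynomial.ringHom_ext
  · intro r
    simp [resHom, dA, RingHom.comp_apply, Ideal.Quotient.lift_mk]
  · intro i
    fin_cases i <;>
      simp [resHom, dA, RingHom.comp_apply, Ideal.Quotient.lift_mk, e₀, e₁]

/-- The subring `L ⊆ B × B × B` of triples with equal augmentations. -/
def L : Subring (B × B × B) :=
  RingHom.eqLocus (ε.comp (RingHom.fst B (B × B)))
      (ε.comp ((RingHom.fst B B).comp (RingHom.snd B (B × B)))) ⊓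
  RingHom.eqLocus (ε.comp (RingHom.fst B (B × B)))
      (ε.comp ((RingHom.snd B B).comp (RingHom.snd B (B × B))))

lemma triple_mem_L (a : A) : (r₁.prod (r₂.prod r₃)) a ∈ L := by
  have h1 : ε (r₁ a) = dA a := RingHom.congr_fun (eps_comp_resHom 1 u _ _ (map_one ε) eps_u) a
  have h2 : ε (r₂ a) = dA a := RingHom.congr_fun (eps_comp_resHom u 1 _ _ eps_u (map_one ε)) a
  have h3 : ε (r₃ a) = dA a := RingHom.congr_fun (eps_comp_resHom u u _ _ eps_u eps_u) a
  constructor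
  · show ε (r₁ a) = ε (r₂ a)
    rw [h1, h2]
  · show ε (r₁ a) = ε (r₃ a)
    rw [h1, h3]

/-- The combined restriction map `r = (r₁, r₂, r₃) : A → L`. -/
def r : A →+* L :=
  RingHom.codRestrict (r₁.prod (r₂.prod r₃)) L triple_mem_L

/-- `ε' : B → ℤ`, the character `u ↦ -1`. -/
def ε' : B →+* ℤ :=
  Ideal.Quotient.lift JB (Polynomial.evalRingHom (-1)) (by
    intro a ha
    rw [JB, Ideal.mem_span_singleton] at ha
    obtain ⟨q, rfl⟩ := ha
    simp)

lemma eps'_u : ε' u = -1 := by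
  show Ideal.Quotient.lift JB (Polynomial.evalRingHom (-1)) _ (Ideal.Quotient.mk JB X) = -1
  rw [Ideal.Quotient.lift_mk]
  simp

lemma u_pow (n : ℕ) : u ^ n = 1 ∨ u ^ n = u := by
  induction n with
  | zero => left; rfl
  | succ m ih =>
    rcases ih with h | h
    · right; rw [pow_succ, h, one_mul]
    · left; rw [pow_succ, h, ← pow_two, u_sq]

lemma B_decomp (b : B) : ∃ a c : ℤ, b = a • (1 : B) + c • u := by
  obtain ⟨p, rfl⟩ := Ideal.Quotient.mk_surjective (I := JB) b
  induction p using Polynomial.induction_on' with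
  | add p q hp hq =>
    obtain ⟨a₁, c₁, h₁⟩ := hp
    obtain ⟨a₂, c₂, h₂⟩ := hq
    exact ⟨a₁ + a₂, c₁ + c₂, by rw [map_add, h₁, h₂, add_smul, add_smul]; abel⟩
  | monomial n a =>
    have : (Ideal.Quotient.mk JB) ((Polynomial.monomial n) a) = a • u ^ n := by
      rw [← Polynomial.C_mul_X_pow_eq_monomial, map_mul, map_pow]
      show (Ideal.Quotient.mk JB) (Polynomial.C a) * u ^ n = a • u ^ n
      rw [eq_intCast Polynomial.C a, map_intCast, zsmul_eq_mul]
    rcases u_pow n with h | h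
    · exact ⟨a, 0, by rw [this, h]; simp⟩
    · exact ⟨0, a, by rw [this, h]; simp⟩

lemma eps_comb (a c : ℤ) : ε (a • (1 : B) + c • u) = a + c := by
  rw [map_add, map_zsmul, map_zsmul, map_one, eps_u, smul_eq_mul, smul_eq_mul,
    mul_one, mul_one]

lemma eps'_comb (a c : ℤ) : ε' (a • (1 : B) + c • u) = a - c := by
  rw [map_add, map_zsmul, map_zsmul, map_one, eps'_u, smul_eq_mul, smul_eq_mul,
    mul_one, mul_neg_one, ← sub_eq_add_neg]

lemma B_inj {a c a' c' : ℤ} (h : a • (1 : B) + c • u = a' • (1 : B) + c' • u) :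
    a = a' ∧ c = c' := by
  have h1 := congrArg ε h
  have h2 := congrArg ε' h
  rw [eps_comb, eps_comb] at h1
  rw [eps'_comb, eps'_comb] at h2
  omega

/-- The class of `s` in `A`. -/
def σA : A := Ideal.Quotient.mk IA (MvPolynomial.X 0)

/-- The class of `t` in `A`. -/
def τA : A := Ideal.Quotient.mk IA (MvPolynomial.X 1)

lemma σA_sq : σA ^ 2 = 1 := by
  show (Ideal.Quotient.mk IA (MvPolynomial.X 0)) ^ 2 = 1
  rw [← map_pow, ← map_one (Ideal.Quotient.mk IA), Ideal.Quotient.mk_eq_mk_iff_sub_mem]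
  exact Ideal.subset_span (Or.inl rfl)

lemma τA_sq : τA ^ 2 = 1 := by
  show (Ideal.Quotient.mk IA (MvPolynomial.X 1)) ^ 2 = 1
  rw [← map_pow, ← map_one (Ideal.Quotient.mk IA), Ideal.Quotient.mk_eq_mk_iff_sub_mem]
  exact Ideal.subset_span (Or.inr rfl)

lemma A_decomp (x : A) :
    ∃ a b c d : ℤ, x = a • (1 : A) + b • σA + c • τA + d • (σA * τA) := by
  obtain ⟨p, rfl⟩ := Ideal.Quotient.mk_surjective (I := IA) x
  induction p using MvPolynomial.induction_on with
  | C r =>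
    refine ⟨r, 0, 0, 0, ?_⟩
    rw [show (MvPolynomial.C r : MvPolynomial (Fin 2) ℤ) = ((r : ℤ) : MvPolynomial (Fin 2) ℤ)
      from eq_intCast (MvPolynomial.C : ℤ →+* MvPolynomial (Fin 2) ℤ) r, map_intCast]
    simp [zsmul_eq_mul]
  | add p q hp hq =>
    obtain ⟨a₁, b₁, c₁, d₁, h₁⟩ := hp
    obtain ⟨a₂, b₂, c₂, d₂, h₂⟩ := hq
    refine ⟨a₁ + a₂, b₁ + b₂, c₁ + c₂, d₁ + d₂, ?_⟩
    rw [map_add, h₁, h₂, add_smul, add_smul, add_smul, add_smul]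
    abel
  | mul_X p i hp =>
    obtain ⟨a, b, c, d, h⟩ := hp
    rw [map_mul, h]
    fin_cases i
    · refine ⟨b, a, d, c, ?_⟩
      show _ * σA = _
      simp only [zsmul_eq_mul]
      linear_combination ((b : A) + d * τA) * σA_sq
    · refine ⟨c, d, a, b, ?_⟩
      show _ * τA = _
      simp only [zsmul_eq_mul]
      linear_combination ((c : A) + d * σA) * τA_sq

lemma resHom_σ {T : Type} [CommRing T] (t₀ t₁ : T) (h₀ : t₀ ^ 2 = 1) (h₁ : t₁ ^ 2 = 1) :
    resHom t₀ t₁ h₀ h₁ σA = t₀ := by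
  show Ideal.Quotient.lift IA _ _ (Ideal.Quotient.mk IA (MvPolynomial.X 0)) = t₀
  rw [Ideal.Quotient.lift_mk]
  simp

lemma resHom_τ {T : Type} [CommRing T] (t₀ t₁ : T) (h₀ : t₀ ^ 2 = 1) (h₁ : t₁ ^ 2 = 1) :
    resHom t₀ t₁ h₀ h₁ τA = t₁ := by
  show Ideal.Quotient.lift IA _ _ (Ideal.Quotient.mk IA (MvPolynomial.X 1)) = t₁
  rw [Ideal.Quotient.lift_mk]
  simp

lemma resHom_comb {T : Type} [CommRing T] (t₀ t₁ : T) (h₀ : t₀ ^ 2 = 1) (h₁ : t₁ ^ 2 = 1)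
    (a b c d : ℤ) :
    resHom t₀ t₁ h₀ h₁ (a • (1 : A) + b • σA + c • τA + d • (σA * τA))
      = a • (1 : T) + b • t₀ + c • t₁ + d • (t₀ * t₁) := by
  simp only [map_add, map_zsmul, map_one, map_mul, resHom_σ, resHom_τ]

lemma r₁_comb (a b c d : ℤ) :
    r₁ (a • (1 : A) + b • σA + c • τA + d • (σA * τA)) = (a + b) • (1 : B) + (c + d) • u := by
  rw [r₁, resHom_comb, add_smul, add_smul]
  simp only [smul_eq_mul, zsmul_eq_mul]
  ring

lemma r₂_comb (a b c d : ℤ) :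
    r₂ (a • (1 : A) + b • σA + c • τA + d • (σA * τA)) = (a + c) • (1 : B) + (b + d) • u := by
  rw [r₂, resHom_comb, add_smul, add_smul]
  simp only [smul_eq_mul, zsmul_eq_mul]
  ring

lemma r₃_comb (a b c d : ℤ) :
    r₃ (a • (1 : A) + b • σA + c • τA + d • (σA * τA)) = (a + d) • (1 : B) + (b + c) • u := by
  rw [r₃, resHom_comb, add_smul, add_smul]
  simp only [smul_eq_mul, zsmul_eq_mul]
  have : u * u = 1 := by rw [← pow_two]; exact u_sq
  linear_combination (d : B) * this

lemma r_coe (x : A) : (r x : B × B × B) = (r₁ x, r₂ x, r₃ x) := rfl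

lemma ell_mem : ((u, 1, 1) : B × B × B) ∈ L := by
  constructor
  · show ε u = ε 1
    rw [eps_u, map_one]
  · show ε u = ε 1
    rw [eps_u, map_one]

/-- The element `(u, 1, 1)` of `L`, generating the cokernel. -/
def ell : L := ⟨(u, 1, 1), ell_mem⟩

lemma zero_comb : (0 : B) = (0 : ℤ) • (1 : B) + (0 : ℤ) • u := by simp

lemma u_comb : u = (0 : ℤ) • (1 : B) + (1 : ℤ) • u := by simp

lemma one_comb : (1 : B) = (1 : ℤ) • (1 : B) + (0 : ℤ) • u := by simp

lemma ell_notMem : ¬ ∃ x : A, r x = ell := by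
  rintro ⟨x, hx⟩
  obtain ⟨a, b, c, d, rfl⟩ := A_decomp x
  have hx' : (r (a • (1 : A) + b • σA + c • τA + d • (σA * τA)) : L).val = (ell : L).val :=
    congrArg Subtype.val hx
  rw [r_coe] at hx'
  have h1 : r₁ (a • (1 : A) + b • σA + c • τA + d • (σA * τA)) = u := congrArg Prod.fst hx'
  have h2 : r₂ (a • (1 : A) + b • σA + c • τA + d • (σA * τA)) = 1 :=
    congrArg (fun w => w.2.1) hx'
  have h3 : r₃ (a • (1 : A) + b • σA + c • τA + d • (σA * τA)) = 1 :=
    congrArg (fun w => w.2.2) hx'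
  conv_rhs at h1 => rw [u_comb]
  conv_rhs at h2 => rw [one_comb]
  conv_rhs at h3 => rw [one_comb]
  rw [r₁_comb] at h1
  rw [r₂_comb] at h2
  rw [r₃_comb] at h3
  obtain ⟨e1, e2⟩ := B_inj h1
  obtain ⟨e3, e4⟩ := B_inj h2
  obtain ⟨e5, e6⟩ := B_inj h3
  omega

lemma mem_range_of_coords (z : L) (a₁ c₁ a₂ c₂ a₃ c₃ k : ℤ)
    (h1 : (z : B × B × B).1 = a₁ • (1 : B) + c₁ • u)
    (h2 : (z : B × B × B).2.1 = a₂ • (1 : B) + c₂ • u)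
    (h3 : (z : B × B × B).2.2 = a₃ • (1 : B) + c₃ • u)
    (hk : c₁ + c₂ + c₃ = 2 * k) : ∃ x : A, r x = z := by
  have he1 : ε (z : B × B × B).1 = ε (z : B × B × B).2.1 := z.2.1
  have he2 : ε (z : B × B × B).1 = ε (z : B × B × B).2.2 := z.2.2
  rw [h1, h2, eps_comb, eps_comb] at he1
  rw [h1, h3, eps_comb, eps_comb] at he2
  refine ⟨(a₁ - (k - c₁)) • (1 : A) + (k - c₁) • σA + (k - c₂) • τA + (k - c₃) • (σA * τA), ?_⟩
  apply Subtype.ext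
  rw [r_coe]
  rw [Prod.ext_iff, Prod.ext_iff]
  refine ⟨?_, ?_, ?_⟩
  · rw [r₁_comb, h1, show a₁ - (k - c₁) + (k - c₁) = a₁ by ring,
      show (k - c₂) + (k - c₃) = c₁ by omega]
  · rw [r₂_comb, h2, show a₁ - (k - c₁) + (k - c₂) = a₂ by omega,
      show (k - c₁) + (k - c₃) = c₂ by omega]
  · rw [r₃_comb, h3, show a₁ - (k - c₁) + (k - c₃) = a₃ by omega,
      show (k - c₁) + (k - c₂) = c₃ by omega]

set_option maxHeartbeats 1000000 in
lemma r_ker (x : A) (hx : r x = 0) : x = 0 := by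
  obtain ⟨a, b, c, d, rfl⟩ := A_decomp x
  have hx' : (r (a • (1 : A) + b • σA + c • τA + d • (σA * τA)) : L).val = ((0 : L)).val :=
    congrArg Subtype.val hx
  rw [r_coe] at hx'
  have h1 : r₁ (a • (1 : A) + b • σA + c • τA + d • (σA * τA)) = 0 := congrArg Prod.fst hx'
  have h2 : r₂ (a • (1 : A) + b • σA + c • τA + d • (σA * τA)) = 0 :=
    congrArg (fun w => w.2.1) hx'
  have h3 : r₃ (a • (1 : A) + b • σA + c • τA + d • (σA * τA)) = 0 :=
    congrArg (fun w => w.2.2) hx'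
  rw [r₁_comb, zero_comb] at h1
  rw [r₂_comb, zero_comb] at h2
  rw [r₃_comb, zero_comb] at h3
  obtain ⟨e1, e2⟩ := B_inj h1
  obtain ⟨e3, e4⟩ := B_inj h2
  obtain ⟨e5, e6⟩ := B_inj h3
  have ha : a = 0 := by omega
  have hb : b = 0 := by omega
  have hc : c = 0 := by omega
  have hd : d = 0 := by omega
  rw [ha, hb, hc, hd]
  simp

lemma r_injective : Function.Injective r := by
  intro x y hxy
  have h : r (x - y) = 0 := by rw [map_sub, hxy, sub_self]
  have := r_ker _ h
  exact sub_eq_zero.mp this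

set_option maxHeartbeats 1000000 in
lemma coker_card : Nat.card (L ⧸ (RingHom.range r).toAddSubgroup) = 2 := by
  rw [Nat.card_eq_two_iff]
  refine ⟨(0 : L ⧸ (RingHom.range r).toAddSubgroup), QuotientAddGroup.mk ell, ?_, ?_⟩
  · intro h
    have hm : ell ∈ (RingHom.range r).toAddSubgroup :=
      (QuotientAddGroup.eq_zero_iff ell).mp h.symm
    obtain ⟨x, hx⟩ := hm
    exact ell_notMem ⟨x, hx⟩
  · apply Set.eq_univ_of_forall
    intro q
    induction q using QuotientAddGroup.induction_on with
    | H z =>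
      obtain ⟨a₁, c₁, h1⟩ := B_decomp (z : B × B × B).1
      obtain ⟨a₂, c₂, h2⟩ := B_decomp (z : B × B × B).2.1
      obtain ⟨a₃, c₃, h3⟩ := B_decomp (z : B × B × B).2.2
      rcases Int.even_or_odd (c₁ + c₂ + c₃) with ⟨k, hk⟩ | ⟨k, hk⟩
      · left
        obtain ⟨x, hx⟩ := mem_range_of_coords z a₁ c₁ a₂ c₂ a₃ c₃ k h1 h2 h3 (by omega)
        exact (QuotientAddGroup.eq_zero_iff z).mpr ⟨x, hx⟩
      · right
        show QuotientAddGroup.mk z = QuotientAddGroup.mk ell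
        rw [QuotientAddGroup.eq_iff_sub_mem]
        have g1 : ((z - ell : L) : B × B × B).1 = a₁ • (1 : B) + (c₁ - 1) • u := by
          have e : ((z - ell : L) : B × B × B).1 = (z : B × B × B).1 - u := rfl
          rw [e, h1, sub_smul, one_smul]
          abel
        have g2 : ((z - ell : L) : B × B × B).2.1 = (a₂ - 1) • (1 : B) + c₂ • u := by
          have e : ((z - ell : L) : B × B × B).2.1 = (z : B × B × B).2.1 - 1 := rfl
          rw [e, h2, sub_smul, one_smul]
          abel
        have g3 : ((z - ell : L) : B × B × B).2.2 = (a₃ - 1) • (1 : B) + c₃ • u := by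
          have e : ((z - ell : L) : B × B × B).2.2 = (z : B × B × B).2.2 - 1 := rfl
          rw [e, h3, sub_smul, one_smul]
          abel
        obtain ⟨x, hx⟩ := mem_range_of_coords (z - ell) a₁ (c₁ - 1) (a₂ - 1) c₂ (a₃ - 1) c₃ k
          g1 g2 g3 (by omega)
        exact ⟨x, hx⟩

/-- The restriction homomorphism `R(C₂×C₂) → lim R(C)` over cyclic subgroups is injective
with cokernel of order exactly `2`. -/
theorem restriction_injective_cokernel_two :
    Function.Injective r ∧
      Nat.card (L ⧸ (RingHom.range r).toAddSubgroup) = 2 :=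
  ⟨r_injective, coker_card⟩

end
end

section
/- Let 𝒟 be a small category and 𝒞 ⊆ 𝒟 a full subcategory such that for every object d of 𝒟 not lying in 𝒞 there is no morphism in 𝒟 from d to any object of 𝒞. Define the contravariant functor ℤ_𝒞 from 𝒟 to abelian groups by ℤ_𝒞(d) = ℤ if d ∈ 𝒞 and ℤ_𝒞(d) = 0 otherwise, where for a morphism f : d → d' in 𝒟 the induced map ℤ_𝒞(d') → ℤ_𝒞(d) is the identity of ℤ when both d and d' lie in 𝒞, and zero otherwise (under the stated hypothesis this is a well-defined functor). Then for every contravariant functor M from 𝒟 to abelian groups and every s ≥ 0, there is an isomorphism of abelian groups Ext^s(ℤ_𝒞, M) ≅ Ext^s(ℤ, M|_𝒞), where the left-hand Ext is computed in the abelian category of contravariant functors 𝒟 → Ab, the right-hand Ext is computed in the abelian category of contravariant functors 𝒞 → Ab, and ℤ denotes the constant functor with value ℤ. -/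
/-!
Restriction `M ↦ M|_𝒞` has a left adjoint `j_!`, extension by zero, given by `X(d)` on `𝒞` and
by `0` off `𝒞`; it is a functor because nothing outside `𝒞` maps into `𝒞`. Both functors are
exact (they are computed objectwise), so the adjunction passes to derived categories and gives
`Ext^s(j_! X, M) ≅ Ext^s(X, M|_𝒞)`. Finally `ℤ_𝒞 ≅ j_! ℤ`: the counit `j_!(N|_𝒞) → N` is an
isomorphism for every `N` vanishing off `𝒞`, and `ℤ_𝒞|_𝒞` is the constant functor `ℤ`.
-/

open CategoryTheory

open scoped Classical

universe u

variable {𝒟 : Type} [SmallCategory 𝒟]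

/-- The value of the functor `ℤ_𝒞`: `ℤ` on objects satisfying `P`, and `0` otherwise. -/
noncomputable def ZCobj (P : 𝒟 → Prop) (d : 𝒟) : AddCommGrpCat :=
  if P d then AddCommGrpCat.of ℤ else AddCommGrpCat.of PUnit

/-- The action of the functor `ℤ_𝒞` on morphisms: the identity of `ℤ` when both objects
satisfy `P`, and zero otherwise. -/
noncomputable def ZCmap (P : 𝒟 → Prop) {a b : 𝒟} (_ : a ⟶ b) : ZCobj P b ⟶ ZCobj P a :=
  if hb : P b then
    if ha : P a then eqToHom (by simp [ZCobj, ha, hb]) else 0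
  else 0

lemma ZCobj_subsingleton {P : 𝒟 → Prop} {d : 𝒟} (hd : ¬ P d) : Subsingleton (ZCobj P d) := by
  simp only [ZCobj, if_neg hd]
  infer_instance

lemma ZCmap_id (P : 𝒟 → Prop) (a : 𝒟) : ZCmap P (𝟙 a) = 𝟙 (ZCobj P a) := by
  by_cases ha : P a
  · simp [ZCmap, ha]
  · haveI := ZCobj_subsingleton ha
    simp only [ZCmap, dif_neg ha]
    ext x
    exact Subsingleton.elim _ _

lemma ZCmap_comp (P : 𝒟 → Prop)
    (H : ∀ ⦃x y : 𝒟⦄, ¬ P x → P y → (x ⟶ y) → False)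
    {a b c : 𝒟} (u : a ⟶ b) (v : b ⟶ c) :
    ZCmap P (u ≫ v) = ZCmap P v ≫ ZCmap P u := by
  by_cases hc : P c
  · have hb : P b := by
      by_contra hb
      exact H hb hc v
    have ha : P a := by
      by_contra ha
      exact H ha hb u
    simp [ZCmap, ha, hb, hc]
  · simp [ZCmap, hc]

/-- The contravariant functor `ℤ_𝒞 : 𝒟ᵒᵖ ⥤ Ab` which is `ℤ` on objects of the full
subcategory `𝒞` cut out by `P` (with identity transition maps) and `0` elsewhere; this is
a well-defined functor because no object outside `𝒞` admits a morphism into `𝒞`. -/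
noncomputable def ZC (P : 𝒟 → Prop)
    (H : ∀ ⦃x y : 𝒟⦄, ¬ P x → P y → (x ⟶ y) → False) :
    𝒟ᵒᵖ ⥤ AddCommGrpCat where
  obj d := ZCobj P d.unop
  map f := ZCmap P f.unop
  map_id d := ZCmap_id P d.unop
  map_comp f g := ZCmap_comp P H g.unop f.unop

open Limits Opposite

universe w w'

-- Unlike `AddCommGrpCat.ext`, this leaves goals in terms of `Hom.hom`, where `hom_comp` fires.
lemma AddCommGrpCat.hom_ext_of_apply {X Y : AddCommGrpCat} {f g : X ⟶ Y}
    (w : ∀ x, f.hom x = g.hom x) : f = g :=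
  AddCommGrpCat.hom_ext (AddMonoidHom.ext w)

namespace CategoryTheory

namespace Adjunction

section Preadditive

variable {C₁ C₂ : Type*} [Category C₁] [Category C₂] [Preadditive C₁] [Preadditive C₂]
  {F : C₁ ⥤ C₂} {G : C₂ ⥤ C₁} [F.Additive] [G.Additive]

noncomputable def mapHomologicalComplex (adj : F ⊣ G) {ι : Type*} (c : ComplexShape ι) :
    F.mapHomologicalComplex c ⊣ G.mapHomologicalComplex c :=
  Adjunction.mkOfUnitCounit
    { unit :=
        { app K :=
            { f i := adj.unit.app (K.X i)
              comm' i j _ := (adj.unit.naturality (K.d i j)).symm }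
          naturality _ _ φ := by ext i; exact adj.unit.naturality (φ.f i) }
      counit :=
        { app N :=
            { f i := adj.counit.app (N.X i)
              comm' i j _ := (adj.counit.naturality (N.d i j)).symm }
          naturality _ _ φ := by ext i; exact adj.counit.naturality (φ.f i) }
      left_triangle := by
        ext K i
        simp only [NatTrans.comp_app, HomologicalComplex.comp_f, Functor.whiskerRight_app,
          Functor.associator_hom_app, Functor.whiskerLeft_app, Functor.mapHomologicalComplex_map_f,
          Category.id_comp]
        exact adj.left_triangle_components (K.X i)
      right_triangle := by
        ext N i
        simp only [NatTrans.comp_app, HomologicalComplex.comp_f, Functor.whiskerRight_app,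
          Functor.associator_inv_app, Functor.whiskerLeft_app, Functor.mapHomologicalComplex_map_f,
          Category.id_comp]
        exact adj.right_triangle_components (N.X i) }

end Preadditive

section Abelian

variable {C₁ C₂ : Type*} [Category C₁] [Category C₂] [Abelian C₁] [Abelian C₂]
  {F : C₁ ⥤ C₂} {G : C₂ ⥤ C₁} [F.Additive] [G.Additive]
  [PreservesFiniteLimits F] [PreservesFiniteColimits F]
  [PreservesFiniteLimits G] [PreservesFiniteColimits G]

noncomputable def mapDerivedCategory [HasDerivedCategory C₁] [HasDerivedCategory C₂]
    (adj : F ⊣ G) : F.mapDerivedCategory ⊣ G.mapDerivedCategory :=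
  letI : CatCommSq (F.mapHomologicalComplex (ComplexShape.up ℤ)) DerivedCategory.Q
      DerivedCategory.Q F.mapDerivedCategory := ⟨F.mapDerivedCategoryFactors.symm⟩
  letI : CatCommSq (G.mapHomologicalComplex (ComplexShape.up ℤ)) DerivedCategory.Q
      DerivedCategory.Q G.mapDerivedCategory := ⟨G.mapDerivedCategoryFactors.symm⟩
  (adj.mapHomologicalComplex (ComplexShape.up ℤ)).localization
    DerivedCategory.Q (HomologicalComplex.quasiIso C₁ (ComplexShape.up ℤ))
    DerivedCategory.Q (HomologicalComplex.quasiIso C₂ (ComplexShape.up ℤ))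
    F.mapDerivedCategory G.mapDerivedCategory

noncomputable def extAddEquiv [HasExt.{w} C₁] [HasExt.{w'} C₂] (adj : F ⊣ G)
    (X : C₁) (Y : C₂) (n : ℕ) : Abelian.Ext (F.obj X) Y n ≃+ Abelian.Ext X (G.obj Y) n :=
  letI := HasDerivedCategory.standard C₁
  letI := HasDerivedCategory.standard C₂
  Abelian.Ext.homAddEquiv.trans <|
    ((Linear.homCongr ℤ ((F.mapDerivedCategorySingleFunctor 0).app X).symm
      (Iso.refl _)).toAddEquiv.trans <|
    (adj.mapDerivedCategory.homAddEquiv _ _).trans <|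
    (Linear.homCongr ℤ (Iso.refl _)
      ((G.mapDerivedCategory.commShiftIso (n : ℤ)).app _ ≪≫
        (shiftFunctor _ (n : ℤ)).mapIso
          ((G.mapDerivedCategorySingleFunctor 0).app Y))).toAddEquiv).trans
    Abelian.Ext.homAddEquiv.symm

end Abelian

end Adjunction

noncomputable def Iso.extCongr {C : Type*} [Category C] [Abelian C] [HasExt.{w} C]
    {X X' Y Y' : C} (e₁ : X ≅ X') (e₂ : Y ≅ Y') (n : ℕ) :
    Abelian.Ext X Y n ≃+ Abelian.Ext X' Y' n :=
  letI := HasDerivedCategory.standard C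
  Abelian.Ext.homAddEquiv.trans <|
    (Linear.homCongr ℤ ((DerivedCategory.singleFunctor C 0).mapIso e₁)
      ((shiftFunctor _ (n : ℤ)).mapIso
        ((DerivedCategory.singleFunctor C 0).mapIso e₂))).toAddEquiv.trans
    Abelian.Ext.homAddEquiv.symm

namespace ObjectProperty

variable {D : Type*} [Category D] {P : ObjectProperty D}

@[simp]
lemma homMk_id {x : D} (hx : P x) :
    (homMk (𝟙 x) : (⟨x, hx⟩ : FullSubcategory P) ⟶ ⟨x, hx⟩) = 𝟙 _ := rfl

@[simp]
lemma homMk_comp {x y z : D} (hx : P x) (hy : P y) (hz : P z) (f : x ⟶ y) (g : y ⟶ z) :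
    (homMk (f ≫ g) : (⟨x, hx⟩ : FullSubcategory P) ⟶ ⟨z, hz⟩) =
      (homMk f : _ ⟶ ⟨y, hy⟩) ≫ homMk g := rfl

end ObjectProperty

section ExtendByZero

variable {D : Type*} [Category D] {P : ObjectProperty D}
  (H : ∀ ⦃x y : D⦄, ¬ P x → P y → (x ⟶ y) → False)

-- The product over the proofs of `P d` is `X(d)` on `𝒞` and `0` off `𝒞`, with no casts.
noncomputable def extendByZeroObj (X : P.FullSubcategoryᵒᵖ ⥤ AddCommGrpCat.{w}) :
    Dᵒᵖ ⥤ AddCommGrpCat.{w} where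
  obj d := AddCommGrpCat.of (∀ h : PLift (P d.unop), X.obj (op ⟨d.unop, h.down⟩))
  map {d d'} f := AddCommGrpCat.ofHom
    { toFun g h' := if h : P d.unop then
        X.map (ObjectProperty.homMk f.unop : (⟨d'.unop, h'.down⟩ : P.FullSubcategory) ⟶
          ⟨d.unop, h⟩).op (g ⟨h⟩) else 0
      map_zero' := by funext; simp
      map_add' g g' := by funext; split_ifs <;> simp }
  map_id d := by
    refine AddCommGrpCat.hom_ext_of_apply fun g => funext fun ⟨h⟩ => ?_
    simp [h]
  map_comp {d d' d''} f f' := by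
    refine AddCommGrpCat.hom_ext_of_apply fun g => funext fun ⟨h''⟩ => ?_
    by_cases h : P d.unop
    · have h' : P d'.unop := by_contra fun h' => H h' h f.unop
      simp [h, h']
    · by_cases h' : P d'.unop <;> simp [h, h']

@[simp]
lemma extendByZeroObj_map_apply (X : P.FullSubcategoryᵒᵖ ⥤ AddCommGrpCat.{w})
    {d d' : Dᵒᵖ} (f : d ⟶ d') (g) (h') :
    (extendByZeroObj H X).map f g h' = if h : P d.unop then
      X.map (ObjectProperty.homMk f.unop : (⟨d'.unop, h'.down⟩ : P.FullSubcategory) ⟶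
        ⟨d.unop, h⟩).op (g ⟨h⟩) else 0 := rfl

variable {X Y : P.FullSubcategoryᵒᵖ ⥤ AddCommGrpCat.{w}}

noncomputable def extendByZeroMapApp (η : X ⟶ Y) (d : Dᵒᵖ) :
    (extendByZeroObj H X).obj d ⟶ (extendByZeroObj H Y).obj d :=
  AddCommGrpCat.ofHom
    { toFun g h := η.app (op ⟨d.unop, h.down⟩) (g h)
      map_zero' := by funext; simp
      map_add' g g' := by funext; simp }

@[simp]
lemma extendByZeroMapApp_apply (η : X ⟶ Y) (d : Dᵒᵖ) (g) (h) :
    extendByZeroMapApp H η d g h = η.app (op ⟨d.unop, h.down⟩) (g h) := rfl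

variable (P) in
noncomputable def extendByZero :
    (P.FullSubcategoryᵒᵖ ⥤ AddCommGrpCat.{w}) ⥤ (Dᵒᵖ ⥤ AddCommGrpCat.{w}) where
  obj := extendByZeroObj H
  map {X Y} η :=
    { app := extendByZeroMapApp H η
      naturality d d' f := by
        refine AddCommGrpCat.hom_ext_of_apply fun g => funext fun ⟨h'⟩ => ?_
        by_cases h : P d.unop
        · simp [h, NatTrans.naturality_apply]
        · simp [h] }

@[simp]
lemma extendByZero_obj_map_apply {d d' : Dᵒᵖ} (f : d ⟶ d') (g) (h') :
    ((extendByZero P H).obj X).map f g h' = if h : P d.unop then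
      X.map (ObjectProperty.homMk f.unop : (⟨d'.unop, h'.down⟩ : P.FullSubcategory) ⟶
        ⟨d.unop, h⟩).op (g ⟨h⟩) else 0 := rfl

@[simp]
lemma extendByZero_map_app_apply (η : X ⟶ Y) (d : Dᵒᵖ) (g) (h) :
    ((extendByZero P H).map η).app d g h = η.app (op ⟨d.unop, h.down⟩) (g h) := rfl

variable (X)

noncomputable def extendByZeroUnitApp (c : P.FullSubcategoryᵒᵖ) :
    X.obj c ⟶ ((extendByZero P H).obj X).obj (op c.unop.obj) :=
  AddCommGrpCat.ofHom (AddMonoidHom.pi fun _ => AddMonoidHom.id _)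

@[simp]
lemma extendByZeroUnitApp_apply (c : P.FullSubcategoryᵒᵖ) (x) (h) :
    extendByZeroUnitApp H X c x h = x := rfl

noncomputable def extendByZeroCounitApp (N : Dᵒᵖ ⥤ AddCommGrpCat.{w}) (d : Dᵒᵖ) :
    ((extendByZero P H).obj (P.ι.op ⋙ N)).obj d ⟶ N.obj d :=
  AddCommGrpCat.ofHom
    { toFun g := if h : P d.unop then g ⟨h⟩ else 0
      map_zero' := by simp
      map_add' g g' := by split_ifs <;> simp }

@[simp]
lemma extendByZeroCounitApp_apply (N : Dᵒᵖ ⥤ AddCommGrpCat.{w}) (d : Dᵒᵖ) (g) :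
    extendByZeroCounitApp H N d g = if h : P d.unop then g ⟨h⟩ else 0 := rfl

variable (P)

noncomputable def extendByZeroAdjunction :
    extendByZero P H ⊣ (Functor.whiskeringLeft _ _ AddCommGrpCat.{w}).obj P.ι.op :=
  Adjunction.mkOfUnitCounit
    { unit :=
        { app X :=
            { app := extendByZeroUnitApp H X
              naturality c c' f := by
                refine AddCommGrpCat.hom_ext_of_apply fun x => funext fun ⟨h⟩ => ?_
                exact ((extendByZero_obj_map_apply H _ _ ⟨h⟩).trans
                  (dif_pos c.unop.property)).symm }
          naturality X Y η := by
            ext c : 2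
            refine AddCommGrpCat.hom_ext_of_apply fun x => funext fun ⟨h⟩ => ?_
            simp }
      counit :=
        { app N :=
            { app := extendByZeroCounitApp H N
              naturality d d' f := by
                refine AddCommGrpCat.hom_ext_of_apply fun g => ?_
                by_cases h : P d.unop
                · have h' : P d'.unop := by_contra fun h' => H h' h f.unop
                  simp [h, h']
                · simp [h] }
          naturality N N' η := by
            ext d : 2
            refine AddCommGrpCat.hom_ext_of_apply fun g => ?_
            by_cases h : P d.unop <;> simp [h] }
      left_triangle := by
        ext X : 2
        ext d : 2
        refine AddCommGrpCat.hom_ext_of_apply fun g => funext fun ⟨h⟩ => ?_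
        exact congrFun (dif_pos h) _
      right_triangle := by
        ext N : 2
        ext c : 2
        refine AddCommGrpCat.hom_ext_of_apply fun x => ?_
        exact dif_pos c.unop.property }

lemma isIso_extendByZeroAdjunction_counit_app (N : Dᵒᵖ ⥤ AddCommGrpCat.{w})
    (hN : ∀ d, ¬ P d.unop → Subsingleton (N.obj d)) :
    IsIso ((extendByZeroAdjunction P H).counit.app N) := by
  rw [NatTrans.isIso_iff_isIso_app]
  intro d
  rw [ConcreteCategory.isIso_iff_bijective]
  by_cases h : P d.unop
  · refine ⟨fun g g' e => funext fun ⟨_⟩ => ?_, fun x => ⟨fun _ => x, dif_pos h⟩⟩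
    exact (dif_pos h).symm.trans (e.trans (dif_pos h))
  · exact ⟨fun _ _ _ => funext fun ⟨h'⟩ => (h h').elim, fun _ => ⟨0, (hN d h).elim _ _⟩⟩

instance : (extendByZero P H).Additive := (extendByZeroAdjunction P H).left_adjoint_additive

instance : PreservesFiniteColimits (extendByZero P H) :=
  have := (extendByZeroAdjunction P H).leftAdjoint_preservesColimits.{0, 0}
  PreservesColimitsOfSize.preservesFiniteColimits _

noncomputable def extendByZeroCompEvaluationIso {d : Dᵒᵖ} (h : P d.unop) :
    extendByZero P H ⋙ (evaluation Dᵒᵖ AddCommGrpCat.{w}).obj d ≅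
      (evaluation _ AddCommGrpCat.{w}).obj (op ⟨d.unop, h⟩) :=
  NatIso.ofComponents
    (fun _ => AddEquiv.toAddCommGrpIso
      { toFun g := g ⟨h⟩
        invFun x _ := x
        left_inv _ := rfl
        right_inv _ := rfl
        map_add' _ _ := rfl })
    fun _ => rfl

instance : PreservesFiniteLimits (extendByZero P H) where
  preservesFiniteLimits J _ _ := preservesLimitsOfShape_of_evaluation _ J fun d => by
    by_cases h : P d.unop
    · exact preservesLimitsOfShape_of_natIso (extendByZeroCompEvaluationIso P H h).symm
    · refine Functor.preservesLimitsOfShape_of_isZero _ (Functor.isZero _ fun X => ?_) J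
      have : Subsingleton ((extendByZero P H ⋙ (evaluation Dᵒᵖ AddCommGrpCat).obj d).obj X) :=
        ⟨fun _ _ => funext fun ⟨h'⟩ => (h h').elim⟩
      exact AddCommGrpCat.isZero_of_subsingleton _

end ExtendByZero

end CategoryTheory

noncomputable def ZC.restrictionIso (P : 𝒟 → Prop)
    (H : ∀ ⦃x y : 𝒟⦄, ¬ P x → P y → (x ⟶ y) → False) :
    (ObjectProperty.ι P).op ⋙ ZC P H ≅ (Functor.const _).obj (AddCommGrpCat.of ℤ) :=
  NatIso.ofComponents
    (fun c => eqToIso (show ZCobj P c.unop.obj = AddCommGrpCat.of ℤ from if_pos c.unop.property))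
    fun {c c'} f => by simp [ZC, ZCmap, c.unop.property, c'.unop.property]

noncomputable def ZC.isoExtendByZero (P : 𝒟 → Prop)
    (H : ∀ ⦃x y : 𝒟⦄, ¬ P x → P y → (x ⟶ y) → False) :
    ZC P H ≅ (extendByZero P H).obj ((Functor.const _).obj (AddCommGrpCat.of ℤ)) :=
  haveI := isIso_extendByZeroAdjunction_counit_app P H (ZC P H) fun _ h => ZCobj_subsingleton h
  (asIso ((extendByZeroAdjunction P H).counit.app (ZC P H))).symm ≪≫
    (extendByZero P H).mapIso (ZC.restrictionIso P H)

/-- Base change for derived inverse limits: if `𝒞 ⊆ 𝒟` is a full subcategory such that no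
object outside `𝒞` maps into `𝒞`, then for every `M : 𝒟ᵒᵖ ⥤ Ab` and `s ≥ 0` there is an
isomorphism `Ext^s(ℤ_𝒞, M) ≅ Ext^s(ℤ, M|_𝒞)`, the right side computing the derived functors
`lim^s` of `M` restricted to `𝒞ᵒᵖ`. -/
theorem ext_ZC_iso_ext_restriction (P : 𝒟 → Prop)
    (H : ∀ ⦃x y : 𝒟⦄, ¬ P x → P y → (x ⟶ y) → False)
    (M : 𝒟ᵒᵖ ⥤ AddCommGrpCat) (s : ℕ) :
    haveI : HasDerivedCategory (𝒟ᵒᵖ ⥤ AddCommGrpCat) := HasDerivedCategory.standard _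
    haveI : HasDerivedCategory ((ObjectProperty.FullSubcategory P)ᵒᵖ ⥤ AddCommGrpCat) :=
      HasDerivedCategory.standard _
    haveI : HasExt.{1} (𝒟ᵒᵖ ⥤ AddCommGrpCat) := hasExt_of_hasDerivedCategory _
    haveI : HasExt.{1} ((ObjectProperty.FullSubcategory P)ᵒᵖ ⥤ AddCommGrpCat) := hasExt_of_hasDerivedCategory _
    Nonempty
      (Abelian.Ext (ZC P H) M s ≃+
        Abelian.Ext ((Functor.const (ObjectProperty.FullSubcategory P)ᵒᵖ).obj (AddCommGrpCat.of ℤ))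
          ((ObjectProperty.ι P).op ⋙ M) s) :=
  letI : HasDerivedCategory (𝒟ᵒᵖ ⥤ AddCommGrpCat) := HasDerivedCategory.standard _
  letI : HasDerivedCategory ((ObjectProperty.FullSubcategory P)ᵒᵖ ⥤ AddCommGrpCat) :=
    HasDerivedCategory.standard _
  letI : HasExt.{1} (𝒟ᵒᵖ ⥤ AddCommGrpCat) := hasExt_of_hasDerivedCategory _
  letI : HasExt.{1} ((ObjectProperty.FullSubcategory P)ᵒᵖ ⥤ AddCommGrpCat) :=
    hasExt_of_hasDerivedCategory _
  ⟨((ZC.isoExtendByZero P H).extCongr (Iso.refl M) s).trans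
    ((extendByZeroAdjunction P H).extAddEquiv _ M s)⟩
end
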